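/- arXiv:1008.3575 — 9 statements merged into one kernel-verified Lean document; each statement's English description precedes it below -/
import Mathlib

section
/- Let 𝔤, V and T be as in the context. Then the Faulkner map T is 𝔤-equivariant: for all x ∈ 𝔤 and all v, w ∈ V one has ⁅x, T(v,w)⁆ = T(x·v, w) + T(v, x·w). In particular, the linear span of {T(v,w) : v,w ∈ V} is an ideal of the Lie algebra 𝔤. -/
/-- The Faulkner map associated to a metric real Lie algebra `𝔤` and an orthogonal
representation `V` is `𝔤`-equivariant, and in particular its image spans an ideal of `𝔤`. -/
theorem faulkner_map_equivariant
    (𝔤 : Type*) [LieRing 𝔤] [LieAlgebra ℝ 𝔤] [FiniteDimensional ℝ 𝔤]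
    (V : Type*) [AddCommGroup V] [Module ℝ V] [FiniteDimensional ℝ V]
    [LieRingModule 𝔤 V] [LieModule ℝ 𝔤 V]
    (B : 𝔤 →ₗ[ℝ] 𝔤 →ₗ[ℝ] ℝ)
    (hBsymm : ∀ x y : 𝔤, B x y = B y x)
    (hBnondeg : ∀ x : 𝔤, (∀ y : 𝔤, B x y = 0) → x = 0)
    (hBinv : ∀ x y z : 𝔤, B ⁅x, y⁆ z + B y ⁅x, z⁆ = 0)
    (ip : V →ₗ[ℝ] V →ₗ[ℝ] ℝ)
    (hipsymm : ∀ u v : V, ip u v = ip v u)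
    (hipnondeg : ∀ u : V, (∀ v : V, ip u v = 0) → u = 0)
    (hipinv : ∀ (x : 𝔤) (u v : V), ip ⁅x, u⁆ v + ip u ⁅x, v⁆ = 0)
    (T : V →ₗ[ℝ] V →ₗ[ℝ] 𝔤)
    (hT : ∀ (u v : V) (x : 𝔤), B (T u v) x = ip ⁅x, u⁆ v) :
    (∀ (x : 𝔤) (v w : V), ⁅x, T v w⁆ = T ⁅x, v⁆ w + T v ⁅x, w⁆) ∧
      ∀ x : 𝔤, ∀ y ∈ Submodule.span ℝ (Set.range fun p : V × V => T p.1 p.2),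
        ⁅x, y⁆ ∈ Submodule.span ℝ (Set.range fun p : V × V => T p.1 p.2) := by

  have key : ∀ (x : 𝔤) (v w : V), ⁅x, T v w⁆ = T ⁅x, v⁆ w + T v ⁅x, w⁆ := by
    intro x v w
    have h : ⁅x, T v w⁆ - (T ⁅x, v⁆ w + T v ⁅x, w⁆) = 0 := by
      apply hBnondeg
      intro y
      have a1 := hBinv x y (T v w)
      have a2 := hBsymm y ⁅x, T v w⁆
      have a3 := hBsymm (T v w) ⁅x, y⁆
      have a4 := hT v w ⁅x, y⁆
      have b1 := hT ⁅x, v⁆ w y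
      have c1 := hT v ⁅x, w⁆ y
      have c2 := hipinv x ⁅y, v⁆ w
      have j : ip ⁅⁅x, y⁆, v⁆ w = ip ⁅x, ⁅y, v⁆⁆ w - ip ⁅y, ⁅x, v⁆⁆ w := by
        have := congrArg (fun u => ip u w) (lie_lie x y v)
        simpa using this
      simp only [map_sub, map_add, LinearMap.sub_apply, LinearMap.add_apply]
      linarith
    have := sub_eq_zero.mp h
    exact this
  refine ⟨key, ?_⟩
  intro x y hy
  induction hy using Submodule.span_induction with
  | mem z hz =>
      obtain ⟨⟨v, w⟩, rfl⟩ := hz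
      rw [key]
      exact add_mem (Submodule.subset_span ⟨(⁅x, v⁆, w), rfl⟩)
        (Submodule.subset_span ⟨(v, ⁅x, w⁆), rfl⟩)
  | zero => simpa using Submodule.zero_mem _
  | add a b _ _ ha hb => rw [lie_add]; exact add_mem ha hb
  | smul c a _ ha => rw [lie_smul]; exact Submodule.smul_mem _ _ ha
end

section
/- Let 𝔤, V and T be as in the context, and assume the representation is faithful, i.e. if x ∈ 𝔤 satisfies x·u = 0 for all u ∈ V then x = 0. Then T is surjective onto 𝔤: the linear span of {T(u,v) : u,v ∈ V} equals all of 𝔤. -/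
/-- If the orthogonal representation `V` of the metric real Lie algebra `𝔤` is faithful,
then the Faulkner map `T` is surjective onto `𝔤`: the span of its image is all of `𝔤`. -/
theorem faulkner_map_surjective
    (𝔤 : Type*) [LieRing 𝔤] [LieAlgebra ℝ 𝔤] [FiniteDimensional ℝ 𝔤]
    (V : Type*) [AddCommGroup V] [Module ℝ V] [FiniteDimensional ℝ V]
    [LieRingModule 𝔤 V] [LieModule ℝ 𝔤 V]
    (B : 𝔤 →ₗ[ℝ] 𝔤 →ₗ[ℝ] ℝ)
    (hBsymm : ∀ x y : 𝔤, B x y = B y x)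
    (hBnondeg : ∀ x : 𝔤, (∀ y : 𝔤, B x y = 0) → x = 0)
    (hBinv : ∀ x y z : 𝔤, B ⁅x, y⁆ z + B y ⁅x, z⁆ = 0)
    (ip : V →ₗ[ℝ] V →ₗ[ℝ] ℝ)
    (hipsymm : ∀ u v : V, ip u v = ip v u)
    (hipnondeg : ∀ u : V, (∀ v : V, ip u v = 0) → u = 0)
    (hipinv : ∀ (x : 𝔤) (u v : V), ip ⁅x, u⁆ v + ip u ⁅x, v⁆ = 0)
    (T : V →ₗ[ℝ] V →ₗ[ℝ] 𝔤)
    (hT : ∀ (u v : V) (x : 𝔤), B (T u v) x = ip ⁅x, u⁆ v)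
    (hFaithful : ∀ x : 𝔤, (∀ u : V, ⁅x, u⁆ = 0) → x = 0) :
    Submodule.span ℝ (Set.range fun p : V × V => T p.1 p.2) = ⊤ := by
  by_contra h
  have hlt : Submodule.span ℝ (Set.range fun p : V × V => T p.1 p.2) < ⊤ :=
    lt_of_le_of_ne le_top h
  -- get a nonzero functional vanishing on the span
  obtain ⟨f, hf⟩ := Submodule.exists_dual_map_eq_bot_of_lt_top hlt inferInstance
  -- B : 𝔤 → Dual is bijective
  have hinj : Function.Injective B := by
    rw [← LinearMap.ker_eq_bot, LinearMap.ker_eq_bot']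
    intro x hx
    exact hBnondeg x (fun y => by rw [hx]; rfl)
  have hsurj : Function.Surjective B :=
    (LinearMap.injective_iff_surjective_of_finrank_eq_finrank
      (Subspace.dual_finrank_eq (K := ℝ) (V := 𝔤)).symm).mp hinj
  obtain ⟨x, hx⟩ := hsurj f
  have hx0 : x ≠ 0 := fun h0 => hf.1 (by rw [← hx, h0, map_zero])
  apply hx0
  apply hFaithful
  intro u
  apply hipnondeg
  intro v
  have hspan : ∀ w ∈ Submodule.span ℝ (Set.range fun p : V × V => T p.1 p.2), f w = 0 := by
    intro w hw
    have : f w ∈ Submodule.map f (Submodule.span ℝ (Set.range fun p : V × V => T p.1 p.2)) :=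
      Submodule.mem_map_of_mem hw
    rw [hf.2] at this
    simpa using this
  have hTm : f (T u v) = 0 :=
    hspan _ (Submodule.subset_span ⟨(u, v), rfl⟩)
  calc ip ⁅x, u⁆ v = B (T u v) x := (hT u v x).symm
    _ = B x (T u v) := hBsymm _ _
    _ = f (T u v) := by rw [hx]
    _ = 0 := hTm
end

section
/- Let 𝔤, V and T be as in the context, and define the 3-bracket [u,v,w] := T(u,v)·w on V. Then T is alternating, T(u,v) = −T(v,u) for all u,v ∈ V, and (V, [−,−,−], ⟨−,−⟩) is a metric 3-Leibniz algebra: for all x,y,z,s,t ∈ V the bracket satisfies the fundamental identity [x,y,[z,s,t]] = [[x,y,z],s,t] + [z,[x,y,s],t] + [z,s,[x,y,t]], the unitarity condition ⟨[x,y,z],s⟩ + ⟨z,[x,y,s]⟩ = 0, and the symmetry condition ⟨[x,y,z],s⟩ = ⟨[z,s,x],y⟩. -/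
/-- The Faulkner map `T` of a metric real Lie algebra with a faithful orthogonal
representation is alternating, and the 3-bracket `[u,v,w] := T(u,v)·w` makes `V` into a
metric 3-Leibniz algebra: it satisfies the fundamental identity, the unitarity condition
and the symmetry condition. -/
theorem faulkner_threeBracket_metric_threeLeibniz
    (𝔤 : Type*) [LieRing 𝔤] [LieAlgebra ℝ 𝔤] [FiniteDimensional ℝ 𝔤]
    (V : Type*) [AddCommGroup V] [Module ℝ V] [FiniteDimensional ℝ V]
    [LieRingModule 𝔤 V] [LieModule ℝ 𝔤 V]
    (B : 𝔤 →ₗ[ℝ] 𝔤 →ₗ[ℝ] ℝ)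
    (hBsymm : ∀ x y : 𝔤, B x y = B y x)
    (hBnondeg : ∀ x : 𝔤, (∀ y : 𝔤, B x y = 0) → x = 0)
    (hBinv : ∀ x y z : 𝔤, B ⁅x, y⁆ z + B y ⁅x, z⁆ = 0)
    (ip : V →ₗ[ℝ] V →ₗ[ℝ] ℝ)
    (hipsymm : ∀ u v : V, ip u v = ip v u)
    (hipnondeg : ∀ u : V, (∀ v : V, ip u v = 0) → u = 0)
    (hipinv : ∀ (x : 𝔤) (u v : V), ip ⁅x, u⁆ v + ip u ⁅x, v⁆ = 0)
    (T : V →ₗ[ℝ] V →ₗ[ℝ] 𝔤)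
    (hT : ∀ (u v : V) (x : 𝔤), B (T u v) x = ip ⁅x, u⁆ v) :
    (∀ u v : V, T u v = - T v u) ∧
    (∀ x y z s t : V, ⁅T x y, ⁅T z s, t⁆⁆ =
        ⁅T ⁅T x y, z⁆ s, t⁆ + ⁅T z ⁅T x y, s⁆, t⁆ + ⁅T z s, ⁅T x y, t⁆⁆) ∧
    (∀ x y z s : V, ip ⁅T x y, z⁆ s + ip z ⁅T x y, s⁆ = 0) ∧
    (∀ x y z s : V, ip ⁅T x y, z⁆ s = ip ⁅T z s, x⁆ y) := by
  have hskew : ∀ u v : V, T u v = - T v u := by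
    intro u v
    have h : T u v + T v u = 0 := by
      apply hBnondeg
      intro x
      have h1 := hipinv x u v
      have h2 := hT u v x
      have h3 := hT v u x
      have h4 := hipsymm u ⁅x, v⁆
      simp only [map_add, LinearMap.add_apply]
      linarith
    exact eq_neg_of_add_eq_zero_left h
  have hequiv : ∀ (a : 𝔤) (z s : V), ⁅a, T z s⁆ = T ⁅a, z⁆ s + T z ⁅a, s⁆ := by
    intro a z s
    have h : ⁅a, T z s⁆ - (T ⁅a, z⁆ s + T z ⁅a, s⁆) = 0 := by
      apply hBnondeg
      intro x
      have h1 := hBinv a (T z s) x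
      have h2 := hT z s ⁅a, x⁆
      have h3 := hT ⁅a, z⁆ s x
      have h4 := hT z ⁅a, s⁆ x
      have h5 := hipinv a ⁅x, z⁆ s
      have h6 : ip ⁅⁅a, x⁆, z⁆ s = ip ⁅a, ⁅x, z⁆⁆ s - ip ⁅x, ⁅a, z⁆⁆ s := by
        have hj : (⁅⁅a, x⁆, z⁆ : V) = ⁅a, ⁅x, z⁆⁆ - ⁅x, ⁅a, z⁆⁆ := by
          rw [lie_lie]
        rw [hj, map_sub, LinearMap.sub_apply]
      simp only [map_sub, map_add, LinearMap.sub_apply, LinearMap.add_apply]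
      linarith
    have := sub_eq_zero.mp h
    exact this
  refine ⟨hskew, ?_, ?_, ?_⟩
  · intro x y z s t
    have h := leibniz_lie (T x y) (T z s) t
    rw [hequiv (T x y) z s, add_lie] at h
    rw [h, add_assoc]
  · intro x y z s
    exact hipinv (T x y) z s
  · intro x y z s
    have h1 := hT z s (T x y)
    have h2 := hT x y (T z s)
    rw [hBsymm] at h1
    rw [h1] at h2
    exact h2
end

section
/- Let 𝔤, V and T be as in the context, and let J : V → V be a 𝔤-invariant orthogonal linear map with J∘J = −id, ⟨Ju,Jv⟩ = ⟨u,v⟩ and J(x·u) = x·(Ju) for all x ∈ 𝔤 and u,v ∈ V. Then the quaternionic Faulkner map is symmetric: T(u, Jv) = T(v, Ju) for all u,v ∈ V. If moreover I is a 𝔤-invariant orthogonal complex structure on V anticommuting with J, then also T(u, IJv) = T(v, IJu) for all u,v ∈ V. -/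
/-- The quaternionic Faulkner map is symmetric: `T(u,Jv) = T(v,Ju)` for a 𝔤-invariant
orthogonal `J` with `J² = -1`; and if `I` is a 𝔤-invariant orthogonal complex structure
anticommuting with `J`, then also `T(u,IJv) = T(v,IJu)`. -/
theorem faulkner_map_quaternionic_symmetric
    (𝔤 : Type*) [LieRing 𝔤] [LieAlgebra ℝ 𝔤] [FiniteDimensional ℝ 𝔤]
    (V : Type*) [AddCommGroup V] [Module ℝ V] [FiniteDimensional ℝ V]
    [LieRingModule 𝔤 V] [LieModule ℝ 𝔤 V]
    (B : 𝔤 →ₗ[ℝ] 𝔤 →ₗ[ℝ] ℝ)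
    (hBsymm : ∀ x y : 𝔤, B x y = B y x)
    (hBnondeg : ∀ x : 𝔤, (∀ y : 𝔤, B x y = 0) → x = 0)
    (hBinv : ∀ x y z : 𝔤, B ⁅x, y⁆ z + B y ⁅x, z⁆ = 0)
    (ip : V →ₗ[ℝ] V →ₗ[ℝ] ℝ)
    (hipsymm : ∀ u v : V, ip u v = ip v u)
    (hipnondeg : ∀ u : V, (∀ v : V, ip u v = 0) → u = 0)
    (hipinv : ∀ (x : 𝔤) (u v : V), ip ⁅x, u⁆ v + ip u ⁅x, v⁆ = 0)
    (T : V →ₗ[ℝ] V →ₗ[ℝ] 𝔤)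
    (hT : ∀ (u v : V) (x : 𝔤), B (T u v) x = ip ⁅x, u⁆ v)
    (J : V →ₗ[ℝ] V)
    (hJ2 : ∀ u : V, J (J u) = - u)
    (hJorth : ∀ u v : V, ip (J u) (J v) = ip u v)
    (hJequiv : ∀ (x : 𝔤) (u : V), J ⁅x, u⁆ = ⁅x, J u⁆) :
    (∀ u v : V, T u (J v) = T v (J u)) ∧
    (∀ I : V →ₗ[ℝ] V,
      (∀ u : V, I (I u) = - u) →
      (∀ u v : V, ip (I u) (I v) = ip u v) →
      (∀ (x : 𝔤) (u : V), I ⁅x, u⁆ = ⁅x, I u⁆) →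
      (∀ u : V, I (J u) = - J (I u)) →
      ∀ u v : V, T u (I (J v)) = T v (I (J u))) := by
  have key : ∀ K : V →ₗ[ℝ] V,
      (∀ u : V, K (K u) = - u) →
      (∀ u v : V, ip (K u) (K v) = ip u v) →
      (∀ (x : 𝔤) (u : V), K ⁅x, u⁆ = ⁅x, K u⁆) →
      ∀ u v : V, T u (K v) = T v (K u) := by
    intro K hK2 hKorth hKequiv u v
    have hB0 : ∀ x : 𝔤, B (T u (K v) - T v (K u)) x = 0 := by
      intro x
      have h1 : B (T u (K v)) x = ip ⁅x, u⁆ (K v) := hT _ _ _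
      have h2 : B (T v (K u)) x = ip ⁅x, v⁆ (K u) := hT _ _ _
      have h3 : ip ⁅x, u⁆ (K v) = ip (K ⁅x, u⁆) (K (K v)) := (hKorth _ _).symm
      have h4 : ip (K ⁅x, u⁆) (K (K v)) = - ip ⁅x, K u⁆ v := by
        rw [hKequiv, hK2, map_neg]
      have h5 : ip ⁅x, K u⁆ v = - ip (K u) ⁅x, v⁆ := by
        have := hipinv x (K u) v
        linarith
      have h6 : ip (K u) ⁅x, v⁆ = ip ⁅x, v⁆ (K u) := hipsymm _ _
      simp only [map_sub, LinearMap.sub_apply, h1, h2]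
      rw [h3, h4, h5, h6]
      ring
    have := hBnondeg _ hB0
    have := sub_eq_zero.mp this
    exact this
  refine ⟨key J hJ2 hJorth hJequiv, ?_⟩
  intro I hI2 hIorth hIequiv hanticomm u v
  exact key (I ∘ₗ J)
    (fun w => by
      simp only [LinearMap.comp_apply]
      rw [hanticomm, hI2, map_neg, neg_neg, hJ2])
    (fun a b => by simp only [LinearMap.comp_apply]; rw [hIorth, hJorth])
    (fun x w => by simp only [LinearMap.comp_apply]; rw [hJequiv, hIequiv]) u v
end

section
/- Let 𝔤, V, T and a 𝔤-invariant orthogonal complex structure I be as in the context, and define the complex Faulkner 3-bracket ⟦u,v,w⟧ := T(u,v)·w + I(T(u,Iv)·w). Then the following are equivalent: (a) ⟦u,v,w⟧ = ⟦w,v,u⟧ for all u,v,w ∈ V (V is a Jordan triple system); (b) T(u,v)·w + T(v,w)·u + T(w,u)·v = 0 for all u,v,w ∈ V (the underlying real representation is a Lie triple system). -/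
/-- For the complex Faulkner 3-bracket `⟦u,v,w⟧ = T(u,v)·w + I(T(u,Iv)·w)` on an
orthogonal representation `V` with 𝔤-invariant orthogonal complex structure `I`,
`V` is a Jordan triple system (`⟦u,v,w⟧ = ⟦w,v,u⟧`) if and only if the underlying real
representation is a Lie triple system (`T(u,v)·w + T(v,w)·u + T(w,u)·v = 0`). -/
theorem faulkner_JTS_iff_LTS
    (𝔤 : Type*) [LieRing 𝔤] [LieAlgebra ℝ 𝔤] [FiniteDimensional ℝ 𝔤]
    (V : Type*) [AddCommGroup V] [Module ℝ V] [FiniteDimensional ℝ V]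
    [LieRingModule 𝔤 V] [LieModule ℝ 𝔤 V]
    (B : 𝔤 →ₗ[ℝ] 𝔤 →ₗ[ℝ] ℝ)
    (hBsymm : ∀ x y : 𝔤, B x y = B y x)
    (hBnondeg : ∀ x : 𝔤, (∀ y : 𝔤, B x y = 0) → x = 0)
    (hBinv : ∀ x y z : 𝔤, B ⁅x, y⁆ z + B y ⁅x, z⁆ = 0)
    (ip : V →ₗ[ℝ] V →ₗ[ℝ] ℝ)
    (hipsymm : ∀ u v : V, ip u v = ip v u)
    (hipnondeg : ∀ u : V, (∀ v : V, ip u v = 0) → u = 0)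
    (hipinv : ∀ (x : 𝔤) (u v : V), ip ⁅x, u⁆ v + ip u ⁅x, v⁆ = 0)
    (T : V →ₗ[ℝ] V →ₗ[ℝ] 𝔤)
    (hT : ∀ (u v : V) (x : 𝔤), B (T u v) x = ip ⁅x, u⁆ v)
    (I : V →ₗ[ℝ] V)
    (hI2 : ∀ u : V, I (I u) = - u)
    (hIorth : ∀ u v : V, ip (I u) (I v) = ip u v)
    (hIequiv : ∀ (x : 𝔤) (u : V), I ⁅x, u⁆ = ⁅x, I u⁆) :
    (∀ u v w : V,
        ⁅T u v, w⁆ + I ⁅T u (I v), w⁆ = ⁅T w v, u⁆ + I ⁅T w (I v), u⁆) ↔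
    (∀ u v w : V, ⁅T u v, w⁆ + ⁅T v w, u⁆ + ⁅T w u, v⁆ = 0) := by
  -- T is skew-symmetric
  have Tskew : ∀ a b : V, T a b = - T b a := by
    intro a b
    have hz : ∀ y, B (T a b + T b a) y = 0 := by
      intro y
      have h1 := hT a b y
      have h2 := hT b a y
      have h3 := hipinv y a b
      have h4 := hipsymm ⁅y, b⁆ a
      simp only [map_add, LinearMap.add_apply]
      linarith
    have h0 := hBnondeg _ hz
    rw [add_eq_zero_iff_eq_neg] at h0
    exact h0
  -- moving I across the inner product
  have ipI : ∀ a b : V, ip (I a) b = - ip a (I b) := by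
    intro a b
    have h1 := hIorth a (I b)
    rw [hI2 b, map_neg] at h1
    linarith
  -- moving I across T
  have TI : ∀ a b : V, T a (I b) = - T (I a) b := by
    intro a b
    have hz : ∀ y, B (T a (I b) + T (I a) b) y = 0 := by
      intro y
      have h1 := hT a (I b) y
      have h2 := hT (I a) b y
      have h3 := ipI ⁅y, a⁆ b
      rw [hIequiv] at h3
      simp only [map_add, LinearMap.add_apply]
      linarith
    have h0 := hBnondeg _ hz
    rw [add_eq_zero_iff_eq_neg] at h0
    exact h0
  have TIsymm : ∀ a b : V, T a (I b) = T b (I a) := by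
    intro a b
    rw [TI a b, Tskew (I a) b, neg_neg]
  have Bneg1 : ∀ x y : 𝔤, B (-x) y = - B x y := by intro x y; simp
  have Bneg2 : ∀ x y : 𝔤, B x (-y) = - B x y := by intro x y; simp
  constructor
  · -- JTS ⇒ LTS
    intro hjts u v w
    have hJ : ∀ a b c z : V,
        B (T c z) (T a b) - B (T c (I z)) (T a (I b)) =
        B (T a z) (T c b) - B (T a (I z)) (T c (I b)) := by
      intro a b c z
      have h0 : ip (⁅T a b, c⁆ + I ⁅T a (I b), c⁆) z
          = ip (⁅T c b, a⁆ + I ⁅T c (I b), a⁆) z := by rw [hjts a b c]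
      simp only [map_add, LinearMap.add_apply] at h0
      rw [ipI ⁅T a (I b), c⁆ z, ipI ⁅T c (I b), a⁆ z] at h0
      rw [← hT c z (T a b), ← hT c (I z) (T a (I b)), ← hT a z (T c b),
        ← hT a (I z) (T c (I b))] at h0
      linarith
    have key : ∀ z : V, ip (⁅T u v, w⁆ + ⁅T v w, u⁆ + ⁅T w u, v⁆) z = 0 := by
      intro z
      have J1 := hJ u v w z
      have J2 := hJ u v z w
      have J3 := hJ u w v z
      have E1 : B (T z w) (T u v) = - B (T w z) (T u v) := by
        rw [Tskew z w, Bneg1]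
      have E2 : B (T u z) (T w v) = - B (T u z) (T v w) := by
        rw [Tskew w v, Bneg2]
      have E3 : B (T u w) (T z v) = B (T v z) (T w u) := by
        rw [hBsymm (T u w) (T z v), Tskew z v, Tskew u w, Bneg1, Bneg2, neg_neg]
      have E4 : B (T z (I w)) (T u (I v)) = B (T w (I z)) (T u (I v)) := by
        rw [TIsymm z w]
      have E5 : B (T u (I z)) (T v (I w)) = B (T u (I z)) (T w (I v)) := by
        rw [TIsymm v w]
      have E6 : B (T v (I z)) (T u (I w)) = B (T u (I w)) (T z (I v)) := by
        rw [hBsymm (T v (I z)) (T u (I w)), TIsymm v z]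
      have E7 : B (T v z) (T u w) = - B (T v z) (T w u) := by
        rw [Tskew u w, Bneg2]
      simp only [map_add, LinearMap.add_apply]
      rw [← hT w z (T u v), ← hT u z (T v w), ← hT v z (T w u)]
      linarith
    exact hipnondeg _ key
  · -- LTS ⇒ JTS
    intro h u v w
    have h1 := h u v w
    have h2 := h u (I v) w
    have e1 : ⁅T w v, u⁆ = -⁅T v w, u⁆ := by rw [Tskew w v, neg_lie]
    have e2 : ⁅T w (I v), u⁆ = -⁅T (I v) w, u⁆ := by rw [Tskew w (I v), neg_lie]
    have e3 : I ⁅T w u, I v⁆ = -⁅T w u, v⁆ := by rw [hIequiv, hI2, lie_neg]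
    have E : (⁅T u v, w⁆ + I ⁅T u (I v), w⁆) - (⁅T w v, u⁆ + I ⁅T w (I v), u⁆)
        = (⁅T u v, w⁆ + ⁅T v w, u⁆ + ⁅T w u, v⁆)
          + I (⁅T u (I v), w⁆ + ⁅T (I v) w, u⁆ + ⁅T w u, I v⁆) := by
      rw [e1, e2, map_neg, map_add, map_add, e3]
      abel
    have hz : (⁅T u v, w⁆ + I ⁅T u (I v), w⁆) - (⁅T w v, u⁆ + I ⁅T w (I v), u⁆) = 0 := by
      rw [E, h1, h2, map_zero, add_zero]
    exact sub_eq_zero.mp hz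
end

section
/- Let V be a metric 3-Lie algebra and I ⊆ V an ideal. Then: (1) the orthogonal complement I⊥ is an ideal of V; (2) I⊥ centralises I, i.e. [u,v,x] = 0 whenever u ∈ I⊥, v ∈ I and x ∈ V; (3) if I is a minimal ideal (I ≠ 0 and every ideal contained in I equals 0 or I), then I⊥ is a maximal ideal (every ideal containing I⊥ equals I⊥ or V). -/
/-!
Total antisymmetry makes the bracket cyclic, so ad-invariance moves every slot of the bracket
across the form: `⟨s, [x,y,z]⟩ = -⟨x, [y,z,s]⟩`. If `x ∈ I⊥` and `s ∈ I`, then `[y,z,s] ∈ I`,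
so `[x,y,z] ∈ I⊥`; likewise `⟨[u,v,x], w⟩ = -⟨u, [v,x,w]⟩ = 0` for `u ∈ I⊥`, `v ∈ I`, and
nondegeneracy gives `[u,v,x] = 0`. Finally `J ↦ J⊥` is an inclusion-reversing involution on
ideals (finite dimension, nondegenerate symmetric form), so it sends minimal ideals to maximal
ones.
-/

namespace ThreeLie

open LinearMap.BilinForm

variable {V : Type*} [AddCommGroup V] [Module ℝ V]

def IsIdeal (f : V →ₗ[ℝ] V →ₗ[ℝ] V →ₗ[ℝ] V) (J : Submodule ℝ V) : Prop :=
  ∀ x ∈ J, ∀ y z : V, f x y z ∈ J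

theorem bracket_cyclic {f : V →ₗ[ℝ] V →ₗ[ℝ] V →ₗ[ℝ] V}
    (hA1 : ∀ x y z : V, f x y z = - f y x z) (hA2 : ∀ x y z : V, f x y z = - f x z y)
    (x y z : V) : f x y z = f y z x := by
  rw [hA1, hA2, neg_neg]

theorem IsIdeal.bracket_mem_of_mem_right {f : V →ₗ[ℝ] V →ₗ[ℝ] V →ₗ[ℝ] V} {J : Submodule ℝ V}
    (hJ : IsIdeal f J) (hA1 : ∀ x y z : V, f x y z = - f y x z)
    (hA2 : ∀ x y z : V, f x y z = - f x z y) (x y : V) {z : V} (hz : z ∈ J) : f x y z ∈ J := by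
  rw [← bracket_cyclic hA1 hA2]
  exact hJ z hz x y

theorem ip_bracket_eq_neg_ip_bracket {f : V →ₗ[ℝ] V →ₗ[ℝ] V →ₗ[ℝ] V} {ip : V →ₗ[ℝ] V →ₗ[ℝ] ℝ}
    (hA1 : ∀ x y z : V, f x y z = - f y x z) (hA2 : ∀ x y z : V, f x y z = - f x z y)
    (hipsymm : ∀ u v : V, ip u v = ip v u)
    (hipinv : ∀ x y z s : V, ip (f x y z) s + ip z (f x y s) = 0) (x y z s : V) :
    ip s (f x y z) = - ip x (f y z s) := by
  rw [hipsymm, bracket_cyclic hA1 hA2, eq_neg_iff_add_eq_zero, hipinv]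

theorem isIdeal_orthogonal {f : V →ₗ[ℝ] V →ₗ[ℝ] V →ₗ[ℝ] V} {ip : V →ₗ[ℝ] V →ₗ[ℝ] ℝ}
    {J : Submodule ℝ V} (hJ : IsIdeal f J)
    (hA1 : ∀ x y z : V, f x y z = - f y x z) (hA2 : ∀ x y z : V, f x y z = - f x z y)
    (hipsymm : ∀ u v : V, ip u v = ip v u)
    (hipinv : ∀ x y z s : V, ip (f x y z) s + ip z (f x y s) = 0) :
    IsIdeal f (orthogonal ip J) := by
  intro x hx y z s hs
  rw [ip_bracket_eq_neg_ip_bracket hA1 hA2 hipsymm hipinv, hipsymm,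
    hx _ (hJ.bracket_mem_of_mem_right hA1 hA2 y z hs), neg_zero]

theorem bracket_eq_zero_of_mem_orthogonal {f : V →ₗ[ℝ] V →ₗ[ℝ] V →ₗ[ℝ] V}
    {ip : V →ₗ[ℝ] V →ₗ[ℝ] ℝ} {J : Submodule ℝ V} (hJ : IsIdeal f J)
    (hA1 : ∀ x y z : V, f x y z = - f y x z) (hA2 : ∀ x y z : V, f x y z = - f x z y)
    (hipsymm : ∀ u v : V, ip u v = ip v u)
    (hipnondeg : ∀ u : V, (∀ v : V, ip u v = 0) → u = 0)
    (hipinv : ∀ x y z s : V, ip (f x y z) s + ip z (f x y s) = 0)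
    {u v : V} (hu : u ∈ orthogonal ip J) (hv : v ∈ J) (x : V) : f u v x = 0 := by
  refine hipnondeg _ fun w => ?_
  rw [hipsymm, ip_bracket_eq_neg_ip_bracket hA1 hA2 hipsymm hipinv, hipsymm,
    hu _ (hJ v hv x w), neg_zero]

theorem orthogonal_orthogonal_of_symm [FiniteDimensional ℝ V] {ip : V →ₗ[ℝ] V →ₗ[ℝ] ℝ}
    (hipsymm : ∀ u v : V, ip u v = ip v u)
    (hipnondeg : ∀ u : V, (∀ v : V, ip u v = 0) → u = 0) (J : Submodule ℝ V) :
    orthogonal ip (orthogonal ip J) = J := by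
  have hrefl : LinearMap.IsRefl ip := fun x y h => by rwa [hipsymm]
  exact orthogonal_orthogonal (hrefl.nondegenerate_iff_separatingLeft.mpr hipnondeg) hrefl J

end ThreeLie

theorem metric_threeLie_ideal_orthogonal_general
    (V : Type*) [AddCommGroup V] [Module ℝ V] [FiniteDimensional ℝ V]
    (f : V →ₗ[ℝ] V →ₗ[ℝ] V →ₗ[ℝ] V)
    (hA1 : ∀ x y z : V, f x y z = - f y x z)
    (hA2 : ∀ x y z : V, f x y z = - f x z y)
    (ip : V →ₗ[ℝ] V →ₗ[ℝ] ℝ)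
    (hipsymm : ∀ u v : V, ip u v = ip v u)
    (hipnondeg : ∀ u : V, (∀ v : V, ip u v = 0) → u = 0)
    (hipinv : ∀ x y z s : V, ip (f x y z) s + ip z (f x y s) = 0)
    (I : Submodule ℝ V)
    (hI : ∀ x ∈ I, ∀ y z : V, f x y z ∈ I) :
    (∀ x ∈ LinearMap.BilinForm.orthogonal ip I, ∀ y z : V,
        f x y z ∈ LinearMap.BilinForm.orthogonal ip I) ∧
    (∀ u ∈ LinearMap.BilinForm.orthogonal ip I, ∀ v ∈ I, ∀ x : V, f u v x = 0) ∧
    ((I ≠ ⊥ ∧ ∀ J : Submodule ℝ V, (∀ x ∈ J, ∀ y z : V, f x y z ∈ J) → J ≤ I →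
        J = ⊥ ∨ J = I) →
      ∀ J : Submodule ℝ V, (∀ x ∈ J, ∀ y z : V, f x y z ∈ J) →
        LinearMap.BilinForm.orthogonal ip I ≤ J →
        J = LinearMap.BilinForm.orthogonal ip I ∨ J = ⊤) := by
  have hperp := ThreeLie.orthogonal_orthogonal_of_symm hipsymm hipnondeg
  refine ⟨ThreeLie.isIdeal_orthogonal hI hA1 hA2 hipsymm hipinv,
    fun u hu v hv =>
      ThreeLie.bracket_eq_zero_of_mem_orthogonal hI hA1 hA2 hipsymm hipnondeg hipinv hu hv,
    ?_⟩
  rintro ⟨-, hmin⟩ J hJ hIJ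
  have hJI : LinearMap.BilinForm.orthogonal ip J ≤ I := by
    simpa only [hperp] using LinearMap.BilinForm.orthogonal_le (B := ip) hIJ
  rcases hmin _ (ThreeLie.isIdeal_orthogonal hJ hA1 hA2 hipsymm hipinv) hJI with hbot | htop
  · right
    rw [← hperp J, hbot, LinearMap.BilinForm.orthogonal_bot]
  · left
    rw [← hperp J, htop]

/-- In a metric 3-Lie algebra: the orthogonal complement of an ideal is an ideal, the
orthogonal complement of an ideal centralises the ideal, and the orthogonal complement of
a minimal ideal is a maximal ideal. -/
theorem metric_threeLie_ideal_orthogonal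
    (V : Type*) [AddCommGroup V] [Module ℝ V] [FiniteDimensional ℝ V]
    (f : V →ₗ[ℝ] V →ₗ[ℝ] V →ₗ[ℝ] V)
    (hA1 : ∀ x y z : V, f x y z = - f y x z)
    (hA2 : ∀ x y z : V, f x y z = - f x z y)
    (hFI : ∀ x y z s t : V,
      f x y (f z s t) = f (f x y z) s t + f z (f x y s) t + f z s (f x y t))
    (ip : V →ₗ[ℝ] V →ₗ[ℝ] ℝ)
    (hipsymm : ∀ u v : V, ip u v = ip v u)
    (hipnondeg : ∀ u : V, (∀ v : V, ip u v = 0) → u = 0)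
    (hipinv : ∀ x y z s : V, ip (f x y z) s + ip z (f x y s) = 0)
    (I : Submodule ℝ V)
    (hI : ∀ x ∈ I, ∀ y z : V, f x y z ∈ I) :
    (∀ x ∈ LinearMap.BilinForm.orthogonal ip I, ∀ y z : V,
        f x y z ∈ LinearMap.BilinForm.orthogonal ip I) ∧
    (∀ u ∈ LinearMap.BilinForm.orthogonal ip I, ∀ v ∈ I, ∀ x : V, f u v x = 0) ∧
    ((I ≠ ⊥ ∧ ∀ J : Submodule ℝ V, (∀ x ∈ J, ∀ y z : V, f x y z ∈ J) → J ≤ I →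
        J = ⊥ ∨ J = I) →
      ∀ J : Submodule ℝ V, (∀ x ∈ J, ∀ y z : V, f x y z ∈ J) →
        LinearMap.BilinForm.orthogonal ip I ≤ J →
        J = LinearMap.BilinForm.orthogonal ip I ∨ J = ⊤) :=
  metric_threeLie_ideal_orthogonal_general V f hA1 hA2 ip hipsymm hipnondeg hipinv I hI
end

section
/- Let V be an indecomposable metric 3-Lie algebra and let I be a minimal ideal with 0 ≠ I ≠ V (I is a nonzero ideal and every ideal contained in I equals 0 or I). Then I is isotropic, i.e. I ⊆ I⊥, and I is abelian with [I,I,V] = 0, i.e. [u,v,x] = 0 for all u,v ∈ I and x ∈ V. -/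
/-- In an indecomposable metric 3-Lie algebra, a proper minimal ideal is isotropic and
abelian with `[I,I,V] = 0`. -/
theorem metric_threeLie_minimal_ideal_isotropic
    (V : Type*) [AddCommGroup V] [Module ℝ V] [FiniteDimensional ℝ V]
    (f : V →ₗ[ℝ] V →ₗ[ℝ] V →ₗ[ℝ] V)
    (hA1 : ∀ x y z : V, f x y z = - f y x z)
    (hA2 : ∀ x y z : V, f x y z = - f x z y)
    (hFI : ∀ x y z s t : V,
      f x y (f z s t) = f (f x y z) s t + f z (f x y s) t + f z s (f x y t))
    (ip : V →ₗ[ℝ] V →ₗ[ℝ] ℝ)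
    (hipsymm : ∀ u v : V, ip u v = ip v u)
    (hipnondeg : ∀ u : V, (∀ v : V, ip u v = 0) → u = 0)
    (hipinv : ∀ x y z s : V, ip (f x y z) s + ip z (f x y s) = 0)
    (hIndec : ∀ J : Submodule ℝ V, (∀ x ∈ J, ∀ y z : V, f x y z ∈ J) →
      J ⊓ LinearMap.BilinForm.orthogonal ip J = ⊥ → J = ⊥ ∨ J = ⊤)
    (I : Submodule ℝ V)
    (hI : ∀ x ∈ I, ∀ y z : V, f x y z ∈ I)
    (hIbot : I ≠ ⊥) (hItop : I ≠ ⊤)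
    (hImin : ∀ J : Submodule ℝ V, (∀ x ∈ J, ∀ y z : V, f x y z ∈ J) → J ≤ I →
      J = ⊥ ∨ J = I) :
    I ≤ LinearMap.BilinForm.orthogonal ip I ∧
    (∀ u ∈ I, ∀ v ∈ I, ∀ x : V, f u v x = 0) := by
  set Iperp := LinearMap.BilinForm.orthogonal ip I with hIperpdef
  have hmemperp : ∀ v : V, v ∈ Iperp ↔ ∀ n ∈ I, ip n v = 0 := fun v =>
    LinearMap.BilinForm.mem_orthogonal_iff
  -- basic bracket symmetries
  have cyc : ∀ x y z : V, f x y z = f y z x := by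
    intro x y z
    rw [hA1 x y z, hA2 y x z, neg_neg]
  have swap13 : ∀ x y z : V, f x y z = - f z y x := by
    intro x y z
    rw [cyc z y x]; exact hA1 x y z
  have swap34 : ∀ x y z s : V, ip (f x y z) s = - ip (f x y s) z := by
    intro x y z s
    have h := hipinv x y z s
    rw [hipsymm z (f x y s)] at h
    linarith
  have swap14 : ∀ x y z w : V, ip (f x y z) w = - ip (f w y z) x := by
    intro x y z w
    have h1 : ip (f x y z) w = - ip (f z y x) w := by rw [swap13 x y z]; simp
    have h2 : ip (f z y x) w = - ip (f z y w) x := swap34 z y x w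
    have h3 : ip (f z y w) x = - ip (f w y z) x := by rw [swap13 z y w]; simp
    linarith
  have hJideal : ∀ x ∈ I ⊓ Iperp, ∀ y z : V, f x y z ∈ I ⊓ Iperp := by
    intro x hx y z
    rw [Submodule.mem_inf] at hx ⊢
    obtain ⟨hxI, hxP⟩ := hx
    refine ⟨hI x hxI y z, ?_⟩
    rw [hmemperp]
    intro n hn
    have h0 : ip (f n y z) x = 0 := (hmemperp x).mp hxP _ (hI n hn y z)
    rw [hipsymm n (f x y z), swap14 x y z n, h0, neg_zero]
  rcases hImin (I ⊓ Iperp) hJideal inf_le_left with hbot | heq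
  · rcases hIndec I hI hbot with h | h
    · exact absurd h hIbot
    · exact absurd h hItop
  · have hle : I ≤ Iperp := (heq.symm.le).trans inf_le_right
    refine ⟨hle, ?_⟩
    intro u hu v hv x
    apply hipnondeg
    intro s
    have h1 : ip (f u v x) s = - ip (f u v s) x := swap34 u v x s
    have h2 : ip (f u v s) x = - ip (f x v s) u := swap14 u v s x
    have h4 : ip (f x v s) u = - ip (f v x s) u := by rw [hA1 x v s]; simp
    have h5 : ip (f v x s) u = 0 := (hmemperp u).mp (hle hu) _ (hI v hv x s)
    linarith
end

section
/- Let V be an indecomposable metric 3-Lie algebra which is neither one-dimensional nor simple (it has an ideal other than 0 and V). Then V possesses an ideal I such that: I is isotropic (I ⊆ I⊥); [I, I⊥, V] = 0, and in particular [I,I,V] = 0; I⊥ is a maximal coisotropic ideal; the pairing between the quotient V/I⊥ and I induced by ⟨−,−⟩ is nondegenerate, so dim I = dim(V/I⊥); the quotient 3-Lie algebra V/I⊥ is either one-dimensional or has no ideals other than 0 and itself; and the quotient I⊥/I carries an induced metric 3-Lie algebra structure, with 3-bracket induced from that of V and nondegenerate ad-invariant form induced from ⟨−,−⟩. (Thus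 V is a double extension of the metric 3-Lie algebra I⊥/I by the one-dimensional or simple 3-Lie algebra V/I⊥.) -/
/-!
Take a minimal nonzero ideal `I`. Invariance of the metric makes `I⊥` an ideal, so `I ∩ I⊥` is an
ideal inside `I`; it is not `0` by indecomposability, hence it is `I` and `I` is isotropic. The same
invariance turns `⟨[x, y, z], s⟩` into `-⟨x, [y, z, s]⟩`, which gives `[I, I⊥, V] = 0`. If an ideal
`J` contains `I⊥`, then `J⊥ ⊆ I⊥⊥ = I` is an ideal, so either `J⊥ = 0` and `J = V` by
indecomposability, or `J⊥ = I` by minimality and `J = I⊥`. This maximality of `I⊥` says that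
`V/I⊥` has no ideals besides `0` and itself. Finally, `I = I⊥⊥` is the radical of the metric
restricted to `I⊥`, so the metric descends to a nondegenerate form on `I⊥/I`.
-/

open LinearMap (BilinForm)
open LinearMap.BilinForm Submodule

namespace ThreeBracket

section CommRing

variable {R M : Type*} [CommRing R] [AddCommGroup M] [Module R M]

def IsIdeal (f : M →ₗ[R] M →ₗ[R] M →ₗ[R] M) (J : Submodule R M) : Prop :=
  ∀ x ∈ J, ∀ y z, f x y z ∈ J

structure IsAlternating (f : M →ₗ[R] M →ₗ[R] M →ₗ[R] M) : Prop where
  antisymm₁₂ : ∀ x y z, f x y z = -f y x z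
  antisymm₂₃ : ∀ x y z, f x y z = -f x z y

structure IsThreeLie (f : M →ₗ[R] M →ₗ[R] M →ₗ[R] M) : Prop
    extends IsAlternating f where
  fundamental : ∀ x y z s t,
    f x y (f z s t) = f (f x y z) s t + f z (f x y s) t + f z s (f x y t)

def IsInvariant (f : M →ₗ[R] M →ₗ[R] M →ₗ[R] M) (B : BilinForm R M) : Prop :=
  ∀ x y z s, B (f x y z) s + B z (f x y s) = 0

structure IsMetric (f : M →ₗ[R] M →ₗ[R] M →ₗ[R] M) (B : BilinForm R M) : Prop
    extends IsThreeLie f where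
  isSymm : B.IsSymm
  separatingLeft : B.SeparatingLeft
  isInvariant : IsInvariant f B

def IsIndecomposable (f : M →ₗ[R] M →ₗ[R] M →ₗ[R] M) (B : BilinForm R M) : Prop :=
  ∀ J, IsIdeal f J → J ⊓ B.orthogonal J = ⊥ → J = ⊥ ∨ J = ⊤

def IsMinimalIdeal (f : M →ₗ[R] M →ₗ[R] M →ₗ[R] M) (I : Submodule R M) : Prop :=
  Minimal (fun J => IsIdeal f J ∧ J ≠ ⊥) I

variable {f : M →ₗ[R] M →ₗ[R] M →ₗ[R] M} {B : BilinForm R M} {I J W : Submodule R M}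

lemma IsAlternating.cyclic (hf : IsAlternating f) (x y z : M) : f x y z = f y z x := by
  rw [hf.antisymm₂₃, hf.antisymm₁₂ x z y, neg_neg, hf.antisymm₂₃ z, hf.antisymm₁₂ z y x,
    neg_neg]

lemma IsIdeal.mem_mid (hJ : IsIdeal f J) (hf : IsAlternating f) (x : M) {y : M} (hy : y ∈ J)
    (z : M) : f x y z ∈ J := by
  rw [hf.antisymm₁₂]
  exact J.neg_mem (hJ y hy x z)

lemma IsIdeal.mem_right (hJ : IsIdeal f J) (hf : IsAlternating f) (x y : M) {z : M}
    (hz : z ∈ J) : f x y z ∈ J := by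
  rw [← hf.cyclic z x y]
  exact hJ z hz x y

lemma IsIdeal.inf {J' : Submodule R M} (hJ : IsIdeal f J) (hJ' : IsIdeal f J') :
    IsIdeal f (J ⊓ J') :=
  fun x hx y z => ⟨hJ x hx.1 y z, hJ' x hx.2 y z⟩

lemma IsIdeal.orthogonal (hJ : IsIdeal f J) (hf : IsAlternating f) (hinv : IsInvariant f B) :
    IsIdeal f (B.orthogonal J) := by
  intro x hx y z n hn
  have h := hinv y z n x
  rw [hx _ (hJ.mem_right hf y z hn), zero_add, ← hf.cyclic] at h
  exact h

lemma IsIdeal.bracket_eq_zero_of_mem_orthogonal (hJ : IsIdeal f J) (hf : IsAlternating f)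
    (hinv : IsInvariant f B) (hB : B.SeparatingLeft) {x y : M} (hx : x ∈ J)
    (hy : y ∈ B.orthogonal J) (z : M) : f x y z = 0 := by
  refine hB _ fun s => ?_
  have h := hinv y z x s
  rw [hJ.orthogonal hf hinv y hy z s x hx, add_zero, ← hf.cyclic] at h
  exact h

lemma IsMinimalIdeal.le_orthogonal (hI : IsMinimalIdeal f I) (hf : IsAlternating f)
    (hinv : IsInvariant f B) (hind : IsIndecomposable f B) (hItop : I ≠ ⊤) :
    I ≤ B.orthogonal I := by
  by_cases h : I ⊓ B.orthogonal I = ⊥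
  · exact ((hind I hI.1.1 h).elim hI.1.2 hItop).elim
  · exact inf_eq_left.1 (hI.eq_of_le ⟨hI.1.1.inf (hI.1.1.orthogonal hf hinv), h⟩ inf_le_left)

def restrictBracket (f : M →ₗ[R] M →ₗ[R] M →ₗ[R] M) (W : Submodule R M)
    (hW : ∀ x ∈ W, ∀ y ∈ W, ∀ z ∈ W, f x y z ∈ W) : W →ₗ[R] W →ₗ[R] W →ₗ[R] W :=
  LinearMap.mk₂ R (fun x y => (f x y).restrict (hW x x.2 y y.2))
    (fun _ _ _ => by ext; simp) (fun _ _ _ => by ext; simp)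
    (fun _ _ _ => by ext; simp) (fun _ _ _ => by ext; simp)

lemma IsAlternating.restrictBracket (hf : IsAlternating f)
    (hW : ∀ x ∈ W, ∀ y ∈ W, ∀ z ∈ W, f x y z ∈ W) : IsAlternating (restrictBracket f W hW) :=
  ⟨fun x y z => Subtype.ext (hf.antisymm₁₂ x y z), fun x y z => Subtype.ext (hf.antisymm₂₃ x y z)⟩

lemma IsThreeLie.restrictBracket (hf : IsThreeLie f)
    (hW : ∀ x ∈ W, ∀ y ∈ W, ∀ z ∈ W, f x y z ∈ W) : IsThreeLie (restrictBracket f W hW) :=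
  { hf.toIsAlternating.restrictBracket hW with
    fundamental := fun x y z s t => Subtype.ext (hf.fundamental x y z s t) }

def quotientBracket (hf : IsAlternating f) (hJ : IsIdeal f J) :
    (M ⧸ J) →ₗ[R] (M ⧸ J) →ₗ[R] (M ⧸ J) →ₗ[R] (M ⧸ J) :=
  LinearMap.liftQ₂ J J
    (LinearMap.mk₂ R (fun x y => J.mapQ J (f x y) fun _ hz => hJ.mem_right hf x y hz)
      (fun _ _ _ => by ext; simp) (fun _ _ _ => by ext; simp)
      (fun _ _ _ => by ext; simp) (fun _ _ _ => by ext; simp))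
    (fun x hx => by ext y z; simpa using hJ x hx y z)
    (fun y hy => by ext x z; simpa using hJ.mem_mid hf x hy z)

@[simp]
lemma quotientBracket_mk (hf : IsAlternating f) (hJ : IsIdeal f J) (x y z : M) :
    quotientBracket hf hJ (Submodule.Quotient.mk x) (Submodule.Quotient.mk y)
      (Submodule.Quotient.mk z) = Submodule.Quotient.mk (f x y z) :=
  rfl

lemma IsThreeLie.quotientBracket (hf : IsThreeLie f) (hJ : IsIdeal f J) :
    IsThreeLie (quotientBracket hf.toIsAlternating hJ) where
  antisymm₁₂ := by
    rintro ⟨x⟩ ⟨y⟩ ⟨z⟩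
    exact congrArg J.mkQ (hf.antisymm₁₂ x y z)
  antisymm₂₃ := by
    rintro ⟨x⟩ ⟨y⟩ ⟨z⟩
    exact congrArg J.mkQ (hf.antisymm₂₃ x y z)
  fundamental := by
    rintro ⟨x⟩ ⟨y⟩ ⟨z⟩ ⟨s⟩ ⟨t⟩
    exact congrArg J.mkQ (hf.fundamental x y z s t)

lemma eq_bot_or_eq_top_of_isIdeal_quotientBracket (hf : IsAlternating f) (hJ : IsIdeal f J)
    (hmax : ∀ J', IsIdeal f J' → J ≤ J' → J' = J ∨ J' = ⊤) {L : Submodule R (M ⧸ J)}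
    (hL : IsIdeal (quotientBracket hf hJ) L) : L = ⊥ ∨ L = ⊤ := by
  have hL' : IsIdeal f (L.comap J.mkQ) := fun x hx y z =>
    hL _ hx (Submodule.Quotient.mk y) (Submodule.Quotient.mk z)
  have hJL : J ≤ L.comap J.mkQ := fun x hx => by
    simp [(Submodule.Quotient.mk_eq_zero J).2 hx]
  rw [← map_comap_eq_of_surjective J.mkQ_surjective L]
  rcases hmax _ hL' hJL with h | h
  · exact .inl (by rw [h, mkQ_map_self])
  · exact .inr (by rw [h, Submodule.map_top, range_mkQ])

def subquotientBracket (hf : IsAlternating f) (hW : IsIdeal f W) (hJ : IsIdeal f J) :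
    (W ⧸ J.comap W.subtype) →ₗ[R] (W ⧸ J.comap W.subtype) →ₗ[R] (W ⧸ J.comap W.subtype) →ₗ[R]
      (W ⧸ J.comap W.subtype) :=
  quotientBracket (hf.restrictBracket fun x hx y _ z _ => hW x hx y z)
    (J := J.comap W.subtype) fun x hx y z => hJ x hx y z

lemma subquotientBracket_mk (hf : IsAlternating f) (hW : IsIdeal f W) (hJ : IsIdeal f J)
    (x y z w : W) (hw : (w : M) = f x y z) :
    subquotientBracket hf hW hJ (Submodule.Quotient.mk x) (Submodule.Quotient.mk y)
      (Submodule.Quotient.mk z) = Submodule.Quotient.mk w := by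
  obtain rfl : w = restrictBracket f W (fun x hx y _ z _ => hW x hx y z) x y z := Subtype.ext hw
  rfl

def quotientForm (B : BilinForm R M) (hB : B.IsRefl) (W J : Submodule R M)
    (hWJ : W ≤ B.orthogonal J) : BilinForm R (W ⧸ J.comap W.subtype) :=
  (B.restrict W).liftQ₂ _ _ (fun x hx => LinearMap.ext fun y => hWJ y.2 x hx)
    (fun y hy => LinearMap.ext fun x => hB _ _ (hWJ x.2 y hy))

theorem isMetric_subquotient (hf : IsThreeLie f) (hB : B.IsSymm) (hinv : IsInvariant f B)
    (hW : IsIdeal f W) (hJ : IsIdeal f J) (hWJ : W ≤ B.orthogonal J)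
    (hJW : B.orthogonal W ≤ J) :
    IsMetric (subquotientBracket hf.toIsAlternating hW hJ)
      (quotientForm B hB.isRefl W J hWJ) where
  toIsThreeLie := (hf.restrictBracket _).quotientBracket _
  isSymm := ⟨by rintro ⟨x⟩ ⟨y⟩; exact hB.eq x y⟩
  separatingLeft := by
    rintro ⟨x⟩ hx
    exact (Submodule.Quotient.mk_eq_zero _).2
      (hJW fun w hw => hB.isRefl _ _ (hx (Submodule.Quotient.mk ⟨w, hw⟩)))
  isInvariant := by
    rintro ⟨x⟩ ⟨y⟩ ⟨z⟩ ⟨s⟩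
    exact hinv x y z s

end CommRing

section Field

variable {K V : Type*} [Field K] [AddCommGroup V] [Module K V] [FiniteDimensional K V]
  {f : V →ₗ[K] V →ₗ[K] V →ₗ[K] V} {B : BilinForm K V} {I J : Submodule K V}

lemma IsMinimalIdeal.eq_orthogonal_or_eq_top (hI : IsMinimalIdeal f I) (hf : IsAlternating f)
    (hB : B.IsRefl) (hnd : B.Nondegenerate) (hinv : IsInvariant f B)
    (hind : IsIndecomposable f B) (hiso : I ≤ B.orthogonal I) (hJ : IsIdeal f J)
    (hIJ : B.orthogonal I ≤ J) : J = B.orthogonal I ∨ J = ⊤ := by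
  by_cases h : B.orthogonal J = ⊥
  · refine (hind J hJ (by rw [h, inf_bot_eq])).imp_left fun hJ0 => ?_
    exact (hI.1.2 (le_bot_iff.1 (hJ0 ▸ hiso.trans hIJ))).elim
  · have hJI : B.orthogonal J = I := hI.eq_of_le ⟨hJ.orthogonal hf hinv, h⟩
      (orthogonal_orthogonal hnd hB I ▸ orthogonal_le hIJ)
    exact .inl (le_antisymm (hJI ▸ le_orthogonal_orthogonal hB) hIJ)

lemma finrank_eq_finrank_quotient_orthogonal (hB : B.Nondegenerate) (W : Submodule K V) :
    Module.finrank K W = Module.finrank K (V ⧸ B.orthogonal W) := by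
  have := (B.orthogonal W).finrank_quotient_add_finrank
  have := finrank_orthogonal hB W
  have := W.finrank_le
  omega

end Field

end ThreeBracket

open ThreeBracket

/-- Structure theorem: an indecomposable metric 3-Lie algebra which is neither
one-dimensional nor simple possesses an isotropic ideal `I` with `[I,I⊥,V] = 0`
(in particular `[I,I,V] = 0`), whose orthogonal complement `I⊥` is a maximal coisotropic
ideal, the pairing between `V/I⊥` and `I` induced by the metric is nondegenerate (so
`dim I = dim V/I⊥`), the quotient `V/I⊥` is a 3-Lie algebra which is one-dimensional or
has no proper ideals, and `I⊥/I` inherits a metric 3-Lie algebra structure.  Thus `V` is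
a double extension of `I⊥/I` by the one-dimensional or simple 3-Lie algebra `V/I⊥`. -/
theorem metric_threeLie_double_extension
    (V : Type*) [AddCommGroup V] [Module ℝ V] [FiniteDimensional ℝ V]
    (f : V →ₗ[ℝ] V →ₗ[ℝ] V →ₗ[ℝ] V)
    (hA1 : ∀ x y z : V, f x y z = - f y x z)
    (hA2 : ∀ x y z : V, f x y z = - f x z y)
    (hFI : ∀ x y z s t : V,
      f x y (f z s t) = f (f x y z) s t + f z (f x y s) t + f z s (f x y t))
    (ip : V →ₗ[ℝ] V →ₗ[ℝ] ℝ)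
    (hipsymm : ∀ u v : V, ip u v = ip v u)
    (hipnondeg : ∀ u : V, (∀ v : V, ip u v = 0) → u = 0)
    (hipinv : ∀ x y z s : V, ip (f x y z) s + ip z (f x y s) = 0)
    (hIndec : ∀ J : Submodule ℝ V, (∀ x ∈ J, ∀ y z : V, f x y z ∈ J) →
      J ⊓ LinearMap.BilinForm.orthogonal ip J = ⊥ → J = ⊥ ∨ J = ⊤)
    (hProper : ∃ I : Submodule ℝ V, (∀ x ∈ I, ∀ y z : V, f x y z ∈ I) ∧ I ≠ ⊥ ∧ I ≠ ⊤) :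
    ∃ I : Submodule ℝ V,
      let O : Submodule ℝ V := LinearMap.BilinForm.orthogonal ip I
      (∀ x ∈ I, ∀ y z : V, f x y z ∈ I) ∧
      I ≤ O ∧
      (∀ x ∈ I, ∀ y ∈ O, ∀ z : V, f x y z = 0) ∧
      (∀ x ∈ I, ∀ y ∈ I, ∀ z : V, f x y z = 0) ∧
      (∀ x ∈ O, ∀ y z : V, f x y z ∈ O) ∧
      LinearMap.BilinForm.orthogonal ip O ≤ O ∧
      (∀ J : Submodule ℝ V, (∀ x ∈ J, ∀ y z : V, f x y z ∈ J) → O ≤ J →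
        J = O ∨ J = ⊤) ∧
      (∀ x : V, (∀ s ∈ I, ip x s = 0) → x ∈ O) ∧
      (∀ s ∈ I, (∀ x : V, ip x s = 0) → s = 0) ∧
      Module.finrank ℝ ↥I = Module.finrank ℝ (V ⧸ O) ∧
      (∃ fbar : (V ⧸ O) →ₗ[ℝ] (V ⧸ O) →ₗ[ℝ] (V ⧸ O) →ₗ[ℝ] (V ⧸ O),
        (∀ x y z : V,
          fbar (Submodule.Quotient.mk x) (Submodule.Quotient.mk y)
              (Submodule.Quotient.mk z) = Submodule.Quotient.mk (f x y z)) ∧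
        (Module.finrank ℝ (V ⧸ O) = 1 ∨
          ∀ J : Submodule ℝ (V ⧸ O), (∀ a ∈ J, ∀ b c : V ⧸ O, fbar a b c ∈ J) →
            J = ⊥ ∨ J = ⊤)) ∧
      (∃ (fQ : (↥O ⧸ Submodule.comap O.subtype I) →ₗ[ℝ]
               (↥O ⧸ Submodule.comap O.subtype I) →ₗ[ℝ]
               (↥O ⧸ Submodule.comap O.subtype I) →ₗ[ℝ]
               (↥O ⧸ Submodule.comap O.subtype I))
         (ipQ : (↥O ⧸ Submodule.comap O.subtype I) →ₗ[ℝ]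
                (↥O ⧸ Submodule.comap O.subtype I) →ₗ[ℝ] ℝ),
        (∀ x y z w : ↥O, (w : V) = f x y z →
          fQ (Submodule.Quotient.mk x) (Submodule.Quotient.mk y)
              (Submodule.Quotient.mk z) = Submodule.Quotient.mk w) ∧
        (∀ x y : ↥O,
          ipQ (Submodule.Quotient.mk x) (Submodule.Quotient.mk y) = ip (x : V) (y : V)) ∧
        (∀ a b c : ↥O ⧸ Submodule.comap O.subtype I, fQ a b c = - fQ b a c) ∧
        (∀ a b c : ↥O ⧸ Submodule.comap O.subtype I, fQ a b c = - fQ a c b) ∧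
        (∀ a b c d e : ↥O ⧸ Submodule.comap O.subtype I,
          fQ a b (fQ c d e) = fQ (fQ a b c) d e + fQ c (fQ a b d) e + fQ c d (fQ a b e)) ∧
        (∀ a b : ↥O ⧸ Submodule.comap O.subtype I, ipQ a b = ipQ b a) ∧
        (∀ a : ↥O ⧸ Submodule.comap O.subtype I,
          (∀ b : ↥O ⧸ Submodule.comap O.subtype I, ipQ a b = 0) → a = 0) ∧
        (∀ a b c d : ↥O ⧸ Submodule.comap O.subtype I,
          ipQ (fQ a b c) d + ipQ c (fQ a b d) = 0)) := by
  have hV : IsMetric f ip := ⟨⟨⟨hA1, hA2⟩, hFI⟩, ⟨hipsymm⟩, hipnondeg, hipinv⟩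
  have hf := hV.toIsAlternating
  have hnd : Nondegenerate ip := .ofSeparatingLeft hipnondeg
  obtain ⟨K, hK, hK0, hKtop⟩ := hProper
  obtain ⟨I, hIK, hI⟩ : ∃ I ≤ K, IsMinimalIdeal f I :=
    exists_minimal_le_of_wellFoundedLT _ K ⟨hK, hK0⟩
  have hiso : I ≤ orthogonal ip I :=
    hI.le_orthogonal hf hipinv hIndec (ne_top_of_le_ne_top hKtop hIK)
  have hO : IsIdeal f (orthogonal ip I) := hI.1.1.orthogonal hf hipinv
  have hOO : orthogonal ip (orthogonal ip I) = I := orthogonal_orthogonal hnd hV.isSymm.isRefl I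
  have hIO {x y : V} (hx : x ∈ I) (hy : y ∈ orthogonal ip I) (z : V) : f x y z = 0 :=
    hI.1.1.bracket_eq_zero_of_mem_orthogonal hf hipinv hipnondeg hx hy z
  have hmax (J : Submodule ℝ V) (hJ : IsIdeal f J) : orthogonal ip I ≤ J →
      J = orthogonal ip I ∨ J = ⊤ :=
    hI.eq_orthogonal_or_eq_top hf hV.isSymm.isRefl hnd hipinv hIndec hiso hJ
  have hQ := isMetric_subquotient hV.toIsThreeLie hV.isSymm hipinv hO hI.1.1 le_rfl hOO.le
  refine ⟨I, hI.1.1, hiso, fun x hx y hy z => hIO hx hy z, fun x hx y hy z => hIO hx (hiso hy) z,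
    hO, hOO.trans_le hiso, hmax, fun x hx n hn => (hipsymm n x).trans (hx n hn),
    fun s _ hs => hnd.2 s hs, finrank_eq_finrank_quotient_orthogonal hnd I,
    ⟨quotientBracket hf hO, quotientBracket_mk hf hO,
      .inr fun L hL => eq_bot_or_eq_top_of_isIdeal_quotientBracket hf hO hmax hL⟩,
    subquotientBracket hf hO hI.1.1, quotientForm ip hV.isSymm.isRefl _ I le_rfl,
    subquotientBracket_mk hf hO hI.1.1, fun _ _ => rfl, hQ.antisymm₁₂, hQ.antisymm₂₃,
    hQ.fundamental, hQ.isSymm.eq, hQ.separatingLeft, hQ.isInvariant⟩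
end

section
/- Let 𝔤 be a finite-dimensional real Lie algebra with a nondegenerate symmetric ad-invariant bilinear form ⟨−,−⟩_𝔤. On the vector space V = ℝu ⊕ ℝv ⊕ 𝔤 define the symmetric bilinear form extending ⟨−,−⟩_𝔤 by ⟨u,v⟩ = 1, ⟨u,u⟩ = ⟨v,v⟩ = 0 and u,v ⊥ 𝔤, and define the totally antisymmetric trilinear bracket determined by [u,x,y] = ⁅x,y⁆ and [x,y,z] = −⟨⁅x,y⁆,z⟩_𝔤 v for x,y,z ∈ 𝔤, with all 3-brackets having an entry in ℝv, or two entries in ℝu, equal to zero. Then V with this bracket and form is a metric 3-Lie algebra: the bracket satisfies the fundamental identity, the form is nondegenerate and ad-invariant, and v spans an isotropic central subspace ([v,V,V] = 0). Moreover, if ⟨−,−⟩_𝔤 is positive-definite then the form on V is Lorentzian, i.e. of signature (1, dim V − 1). -/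
variable {𝔤 : Type*} [LieRing 𝔤] [LieAlgebra ℝ 𝔤]

/-- The inner product on `V = ℝu ⊕ ℝv ⊕ 𝔤` extending the one on `𝔤` by `⟨u,v⟩ = 1`,
`⟨u,u⟩ = ⟨v,v⟩ = 0`, `u,v ⊥ 𝔤`.  A point `(a,b,x)` stands for `a·u + b·v + x`. -/
def lorentzianIp (κ : 𝔤 →ₗ[ℝ] 𝔤 →ₗ[ℝ] ℝ) (p q : ℝ × ℝ × 𝔤) : ℝ :=
  p.1 * q.2.1 + p.2.1 * q.1 + κ p.2.2 q.2.2

/-- The totally antisymmetric 3-bracket on `V = ℝu ⊕ ℝv ⊕ 𝔤` determined by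
`[u,x,y] = ⁅x,y⁆` and `[x,y,z] = -⟨⁅x,y⁆,z⟩ v` for `x,y,z ∈ 𝔤`, all brackets with an
entry along `v`, or with two entries along `u`, being zero. -/
def lorentzianBracket (κ : 𝔤 →ₗ[ℝ] 𝔤 →ₗ[ℝ] ℝ) (p q r : ℝ × ℝ × 𝔤) : ℝ × ℝ × 𝔤 :=
  ((0 : ℝ), - κ ⁅p.2.2, q.2.2⁆ r.2.2,
    p.1 • ⁅q.2.2, r.2.2⁆ + q.1 • ⁅r.2.2, p.2.2⁆ + r.1 • ⁅p.2.2, q.2.2⁆)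

section Aux

variable {κ : 𝔤 →ₗ[ℝ] 𝔤 →ₗ[ℝ] ℝ}
    (hκsymm : ∀ x y : 𝔤, κ x y = κ y x)
    (hκinv : ∀ x y z : 𝔤, κ ⁅x, y⁆ z + κ y ⁅x, z⁆ = 0)

include hκsymm hκinv in
private lemma kinv3 (x y z : 𝔤) : κ ⁅x, y⁆ z = κ x ⁅y, z⁆ := by
  have h := hκinv y x z
  have hyx : ⁅y, x⁆ = -⁅x, y⁆ := by rw [← lie_skew]
  rw [hyx, map_neg] at h
  have := hκsymm x ⁅y, z⁆
  simp only [LinearMap.neg_apply] at h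
  linarith

include hκsymm hκinv in
private lemma kskew3 (x y z : 𝔤) : κ ⁅x, y⁆ z = - κ ⁅x, z⁆ y := by
  have h := hκinv x y z
  have := hκsymm y ⁅x, z⁆
  linarith

include hκsymm hκinv in
private lemma kjac (y z w v : 𝔤) :
    κ ⁅⁅y, z⁆, w⁆ v + κ ⁅z, ⁅y, w⁆⁆ v + κ ⁅z, w⁆ ⁅y, v⁆ = 0 := by
  have h := hκinv y ⁅z, w⁆ v
  rw [leibniz_lie, map_add, LinearMap.add_apply] at h
  linarith

include hκsymm hκinv in
private lemma kjac' (x z w v : 𝔤) :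
    κ ⁅⁅z, x⁆, w⁆ v + κ ⁅z, ⁅w, x⁆⁆ v + κ ⁅z, w⁆ ⁅v, x⁆ = 0 := by
  have h := kjac hκsymm hκinv x z w v
  have e1 : ⁅z, x⁆ = -⁅x, z⁆ := by rw [← lie_skew]
  have e2 : ⁅w, x⁆ = -⁅x, w⁆ := by rw [← lie_skew]
  have e3 : ⁅v, x⁆ = -⁅x, v⁆ := by rw [← lie_skew]
  rw [e1, e2, e3, neg_lie, lie_neg, map_neg, map_neg, map_neg]
  simp only [LinearMap.neg_apply]
  linarith

include hκsymm hκinv in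
private lemma kcyc (g v z : 𝔤) : κ g ⁅v, z⁆ = κ ⁅z, g⁆ v := by
  rw [hκsymm, kinv3 hκsymm hκinv, hκsymm]

include hκsymm hκinv in
private lemma kbb (x z w : 𝔤) : κ ⁅z, x⁆ w + κ z ⁅w, x⁆ = 0 := by
  have h1 := kinv3 hκsymm hκinv z x w
  have e : ⁅w, x⁆ = -⁅x, w⁆ := by rw [← lie_skew]
  rw [h1, e, map_neg]
  simp

end Aux

/-- The double extension `V = ℝu ⊕ ℝv ⊕ 𝔤` of a metric real Lie algebra `𝔤` is a metric
3-Lie algebra with `v` spanning an isotropic central subspace; if the form on `𝔤` is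
positive-definite, then the form on `V` is Lorentzian. -/
theorem lorentzian_double_extension_is_metric_threeLie
    [FiniteDimensional ℝ 𝔤]
    (κ : 𝔤 →ₗ[ℝ] 𝔤 →ₗ[ℝ] ℝ)
    (hκsymm : ∀ x y : 𝔤, κ x y = κ y x)
    (hκnondeg : ∀ x : 𝔤, (∀ y : 𝔤, κ x y = 0) → x = 0)
    (hκinv : ∀ x y z : 𝔤, κ ⁅x, y⁆ z + κ y ⁅x, z⁆ = 0) :
    (∀ (a : ℝ) (p p' q : ℝ × ℝ × 𝔤),
      lorentzianIp κ (a • p + p') q = a * lorentzianIp κ p q + lorentzianIp κ p' q) ∧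
    (∀ (a : ℝ) (p q q' : ℝ × ℝ × 𝔤),
      lorentzianIp κ p (a • q + q') = a * lorentzianIp κ p q + lorentzianIp κ p q') ∧
    (∀ p q : ℝ × ℝ × 𝔤, lorentzianIp κ p q = lorentzianIp κ q p) ∧
    (∀ (a : ℝ) (p p' q r : ℝ × ℝ × 𝔤),
      lorentzianBracket κ (a • p + p') q r
        = a • lorentzianBracket κ p q r + lorentzianBracket κ p' q r) ∧
    (∀ (a : ℝ) (p q q' r : ℝ × ℝ × 𝔤),
      lorentzianBracket κ p (a • q + q') r
        = a • lorentzianBracket κ p q r + lorentzianBracket κ p q' r) ∧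
    (∀ (a : ℝ) (p q r r' : ℝ × ℝ × 𝔤),
      lorentzianBracket κ p q (a • r + r')
        = a • lorentzianBracket κ p q r + lorentzianBracket κ p q r') ∧
    (∀ p q r : ℝ × ℝ × 𝔤, lorentzianBracket κ p q r = - lorentzianBracket κ q p r) ∧
    (∀ p q r : ℝ × ℝ × 𝔤, lorentzianBracket κ p q r = - lorentzianBracket κ p r q) ∧
    (∀ p q r s t : ℝ × ℝ × 𝔤,
      lorentzianBracket κ p q (lorentzianBracket κ r s t)
        = lorentzianBracket κ (lorentzianBracket κ p q r) s t
          + lorentzianBracket κ r (lorentzianBracket κ p q s) t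
          + lorentzianBracket κ r s (lorentzianBracket κ p q t)) ∧
    (∀ p : ℝ × ℝ × 𝔤, (∀ q : ℝ × ℝ × 𝔤, lorentzianIp κ p q = 0) → p = 0) ∧
    (∀ p q r s : ℝ × ℝ × 𝔤,
      lorentzianIp κ (lorentzianBracket κ p q r) s
        + lorentzianIp κ r (lorentzianBracket κ p q s) = 0) ∧
    (∀ x y : 𝔤,
      lorentzianBracket κ ((1 : ℝ), (0 : ℝ), (0 : 𝔤)) ((0 : ℝ), (0 : ℝ), x)
          ((0 : ℝ), (0 : ℝ), y) = ((0 : ℝ), (0 : ℝ), ⁅x, y⁆)) ∧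
    (∀ x y z : 𝔤,
      lorentzianBracket κ ((0 : ℝ), (0 : ℝ), x) ((0 : ℝ), (0 : ℝ), y)
          ((0 : ℝ), (0 : ℝ), z) = ((0 : ℝ), - κ ⁅x, y⁆ z, (0 : 𝔤))) ∧
    lorentzianIp κ ((0 : ℝ), (1 : ℝ), (0 : 𝔤)) ((0 : ℝ), (1 : ℝ), (0 : 𝔤)) = 0 ∧
    (∀ p q : ℝ × ℝ × 𝔤, lorentzianBracket κ ((0 : ℝ), (1 : ℝ), (0 : 𝔤)) p q = 0) ∧
    ((∀ x : 𝔤, x ≠ 0 → 0 < κ x x) →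
      ∃ N P : Submodule ℝ (ℝ × ℝ × 𝔤),
        IsCompl N P ∧
        Module.finrank ℝ N = 1 ∧
        Module.finrank ℝ P = Module.finrank ℝ (ℝ × ℝ × 𝔤) - 1 ∧
        (∀ p ∈ N, p ≠ 0 → lorentzianIp κ p p < 0) ∧
        (∀ p ∈ P, p ≠ 0 → 0 < lorentzianIp κ p p) ∧
        (∀ p ∈ N, ∀ q ∈ P, lorentzianIp κ p q = 0)) := by
  refine ⟨?_, ?_, ?_, ?_, ?_, ?_, ?_, ?_, ?_, ?_, ?_, ?_, ?_, ?_, ?_, ?_⟩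
  · intro a p p' q
    simp [lorentzianIp]; ring
  · intro a p q q'
    simp [lorentzianIp]; ring
  · intro p q
    simp only [lorentzianIp, hκsymm p.2.2 q.2.2]; ring
  · intro a p p' q r
    simp [lorentzianBracket, Prod.ext_iff, add_lie, smul_lie, lie_smul, lie_add,
      smul_add, smul_smul]
    constructor
    · ring
    · module
  · intro a p q q' r
    simp [lorentzianBracket, Prod.ext_iff, add_lie, smul_lie, lie_smul, lie_add,
      smul_add, smul_smul]
    constructor
    · ring
    · module
  · intro a p q r r'
    simp [lorentzianBracket, Prod.ext_iff, add_lie, smul_lie, lie_smul, lie_add,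
      smul_add, smul_smul]
    constructor
    · ring
    · module
  · intro p q r
    simp only [lorentzianBracket, Prod.ext_iff, Prod.fst_neg, Prod.snd_neg, neg_zero]
    refine ⟨by trivial, ?_, ?_⟩
    · rw [(lie_skew q.2.2 p.2.2).symm, map_neg]
      simp
    · rw [(lie_skew q.2.2 p.2.2).symm, (lie_skew p.2.2 r.2.2).symm,
        (lie_skew q.2.2 r.2.2).symm]
      module
  · intro p q r
    simp only [lorentzianBracket, Prod.ext_iff, Prod.fst_neg, Prod.snd_neg, neg_zero]
    refine ⟨by trivial, ?_, ?_⟩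
    · rw [kskew3 hκsymm hκinv p.2.2 q.2.2 r.2.2]
    · rw [(lie_skew q.2.2 r.2.2).symm, (lie_skew r.2.2 p.2.2).symm,
        (lie_skew p.2.2 q.2.2).symm]
      module
  · intro p q r s t
    obtain ⟨a, _, x⟩ := p
    obtain ⟨b, _, y⟩ := q
    obtain ⟨c, _, z⟩ := r
    obtain ⟨d, _, w⟩ := s
    obtain ⟨e, _, v⟩ := t
    simp only [lorentzianBracket, Prod.mk.injEq, Prod.mk_add_mk]
    refine ⟨by ring, ?_, ?_⟩
    · simp only [map_add, map_smul, LinearMap.add_apply, LinearMap.smul_apply, smul_eq_mul,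
        add_lie, lie_add, smul_lie, lie_smul, zero_smul, zero_add, add_zero, smul_zero]
      have L1 := kjac hκsymm hκinv y z w v
      have L2 := kjac' hκsymm hκinv x z w v
      have L3 := (kinv3 hκsymm hκinv ⁅x, y⁆ w v).symm
      have L4 := kcyc hκsymm hκinv ⁅x, y⁆ v z
      have L5 := hκsymm ⁅x, y⁆ ⁅z, w⁆
      linear_combination a * L1 + b * L2 - c * L3 - d * L4 - e * L5
    · simp only [add_lie, lie_add, smul_lie, lie_smul, smul_add, smul_smul, zero_smul,
        zero_add, add_zero, smul_zero]
      linear_combination (norm := module)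
        (a * c) • leibniz_lie y w v + (a * d) • leibniz_lie y v z + (a * e) • leibniz_lie y z w
        + (b * c) • (lie_skew ⁅w, x⁆ v) - (b * c) • leibniz_lie w v x
        + (b * d) • (lie_skew ⁅v, x⁆ z) - (b * d) • leibniz_lie v z x
        + (b * e) • (lie_skew ⁅z, x⁆ w) - (b * e) • leibniz_lie z w x
        + (c * d) • lie_skew ⁅x, y⁆ v + (c * e) • lie_skew ⁅x, y⁆ w
        + (d * e) • lie_skew ⁅x, y⁆ z
  · intro p hp
    have h3 : p.2.2 = 0 := by
      refine hκnondeg _ fun y => ?_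
      have := hp ((0 : ℝ), (0 : ℝ), y)
      simpa [lorentzianIp] using this
    have ha : p.1 = 0 := by
      have := hp ((0 : ℝ), (1 : ℝ), (0 : 𝔤))
      simpa [lorentzianIp] using this
    have hb : p.2.1 = 0 := by
      have := hp ((1 : ℝ), (0 : ℝ), (0 : 𝔤))
      simpa [lorentzianIp] using this
    exact Prod.ext ha (Prod.ext hb h3)
  · intro p q r s
    obtain ⟨a, _, x⟩ := p
    obtain ⟨b, _, y⟩ := q
    obtain ⟨c, γ, z⟩ := r
    obtain ⟨d, δ, w⟩ := s
    simp only [lorentzianIp, lorentzianBracket, map_add, map_smul, LinearMap.add_apply,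
      LinearMap.smul_apply, smul_eq_mul]
    have h1 := hκinv y z w
    have h2 := kbb hκsymm hκinv x z w
    have h3 := hκsymm z ⁅x, y⁆
    linear_combination a * h1 + b * h2 + d * h3
  · intro x y
    simp [lorentzianBracket]
  · intro x y z
    simp [lorentzianBracket]
  · simp [lorentzianIp]
  · intro p q
    simp [lorentzianBracket, Prod.ext_iff]
  · intro hpos
    have hκ0 : ∀ x : 𝔤, 0 ≤ κ x x := by
      intro x
      rcases eq_or_ne x 0 with h | h
      · simp [h]
      · exact le_of_lt (hpos x h)
    set n : ℝ × ℝ × 𝔤 := ((1 : ℝ), (-1 : ℝ), (0 : 𝔤)) with hn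
    have hn0 : n ≠ 0 := by
      simp only [hn, ne_eq, Prod.ext_iff, Prod.fst_zero]
      intro h
      exact one_ne_zero h.1
    set f : (ℝ × ℝ × 𝔤) →ₗ[ℝ] ℝ :=
      LinearMap.fst ℝ ℝ (ℝ × 𝔤) - (LinearMap.fst ℝ ℝ 𝔤).comp (LinearMap.snd ℝ ℝ (ℝ × 𝔤))
      with hf
    have hfapp : ∀ p : ℝ × ℝ × 𝔤, f p = p.1 - p.2.1 := fun p => rfl
    refine ⟨Submodule.span ℝ {n}, LinearMap.ker f, ?_, ?_, ?_, ?_, ?_, ?_⟩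
    · constructor
      · rw [disjoint_iff]
        ext p
        simp only [Submodule.mem_inf, Submodule.mem_bot]
        constructor
        · rintro ⟨hp1, hp2⟩
          obtain ⟨c, rfl⟩ := Submodule.mem_span_singleton.mp hp1
          have h0 : f (c • n) = 0 := hp2
          rw [map_smul, hfapp] at h0
          simp only [hn, smul_eq_mul] at h0
          norm_num at h0
          simp [h0]
        · rintro rfl
          exact ⟨Submodule.zero_mem _, Submodule.zero_mem _⟩
      · rw [codisjoint_iff, eq_top_iff]
        intro p _
        have : p = ((p.1 - p.2.1) / 2) • n + (p - ((p.1 - p.2.1) / 2) • n) := by ring_nf; abel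
        rw [this]
        refine Submodule.add_mem_sup (Submodule.smul_mem _ _ (Submodule.mem_span_singleton_self n)) ?_
        rw [LinearMap.mem_ker, map_sub, map_smul, hfapp, hfapp]
        simp only [hn, smul_eq_mul]
        ring
    · exact finrank_span_singleton hn0
    · have hsurj : Function.Surjective f := by
        intro r
        exact ⟨(r, 0, 0), by rw [hfapp]; ring⟩
      have := LinearMap.finrank_range_add_finrank_ker f
      rw [LinearMap.range_eq_top.mpr hsurj, finrank_top] at this
      have h1 : Module.finrank ℝ ℝ = 1 := Module.finrank_self ℝ
      omega
    · intro p hp hp0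
      obtain ⟨c, rfl⟩ := Submodule.mem_span_singleton.mp hp
      have hc : c ≠ 0 := by
        rintro rfl
        exact hp0 (zero_smul _ _)
      simp only [lorentzianIp, hn, Prod.smul_mk, smul_eq_mul, smul_zero, map_zero,
        LinearMap.zero_apply]
      nlinarith [mul_self_pos.mpr hc]
    · intro p hp hp0
      have hker : p.1 = p.2.1 := by
        have := LinearMap.mem_ker.mp hp
        rw [hfapp] at this
        linarith
      simp only [lorentzianIp]
      rcases eq_or_ne p.2.2 0 with h | h
      · have h1 : p.1 ≠ 0 := by
          intro h0
          apply hp0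
          have : p.2.1 = 0 := by rw [← hker, h0]
          exact Prod.ext h0 (Prod.ext this h)
        rw [h, map_zero]
        simp only [LinearMap.zero_apply, add_zero, ← hker]
        nlinarith [mul_self_pos.mpr h1]
      · have h2 := hpos p.2.2 h
        rw [← hker]
        nlinarith [mul_self_nonneg p.1]
    · intro p hp q hq
      obtain ⟨c, rfl⟩ := Submodule.mem_span_singleton.mp hp
      have hker : q.1 = q.2.1 := by
        have := LinearMap.mem_ker.mp hq
        rw [hfapp] at this
        linarith
      simp only [lorentzianIp, hn, Prod.smul_mk, smul_eq_mul, smul_zero, map_zero,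
        LinearMap.zero_apply]
      rw [hker]; ring
end
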